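/- Define a_{m,n} := 2m sin(π/m) √(1 + 4n² sin⁴(π/(2m))) for positive integers m, n (the area of the Schwarz–Peano polyhedral surface 𝒮_{m,n} inscribed in the cylinder of height 1 and radius 1). Then, as m → ∞: (i) a_{m,m} → 2π; (ii) a_{m,m²} → 2π √(1 + π⁴/4); (iii) a_{m,m³} → +∞. Consequently the limit of a_{m,n} as m, n → ∞ jointly does not exist, so the area of the inscribed polyhedral surfaces has no limit (the Schwarz–Peano counterexample to Serret's definition of surface area). -/

import Mathlib

/-!
Since `m sin (c / m) → c`, writing
`a_{m,n} = 2 (m sin (π/m)) √(1 + 4 (n/m²)² (m sin (π/(2m)))⁴)` shows that the area is governed by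
`n / m²`: it tends to `2π √(1 + π⁴ L² / 4)` when `n / m² → L`, and to `∞` when `n / m² → ∞`.
The three sequences `n = m, m², m³` give `L = 0`, `L = 1` and `n / m² = m`.
-/

open Real Filter Topology

/-- The area of the Schwarz–Peano polyhedral surface `𝒮_{m,n}` inscribed in the
cylinder of height 1 and radius 1. -/
noncomputable def schwarzArea (m n : ℕ) : ℝ :=
  2 * m * Real.sin (π / m) * Real.sqrt (1 + 4 * n ^ 2 * Real.sin (π / (2 * m)) ^ 4)

lemma natCast_mul_sin_div_eq_mul_sinc (c : ℝ) {m : ℕ} (hm : m ≠ 0) :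
    (m : ℝ) * sin (c / m) = c * sinc (c / m) := by
  rcases eq_or_ne c 0 with rfl | hc
  · simp
  · rw [sinc_of_ne_zero (by positivity)]
    field_simp

lemma tendsto_natCast_mul_sin_div (c : ℝ) :
    Tendsto (fun m : ℕ => (m : ℝ) * sin (c / m)) atTop (𝓝 c) := by
  have hsinc : Tendsto (fun m : ℕ => c * sinc (c / m)) atTop (𝓝 (c * sinc 0)) :=
    (continuous_sinc.tendsto 0).comp (tendsto_const_div_atTop_nhds_zero_nat c) |>.const_mul c
  rw [sinc_zero, mul_one] at hsinc
  refine hsinc.congr' ?_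
  filter_upwards [eventually_ne_atTop 0] with m hm
  exact (natCast_mul_sin_div_eq_mul_sinc c hm).symm

lemma schwarzArea_eq {m : ℕ} (hm : m ≠ 0) (n : ℕ) :
    schwarzArea m n = 2 * (m * sin (π / m)) *
      √(1 + 4 * ((n : ℝ) / m ^ 2) ^ 2 * (m * sin (π / 2 / m)) ^ 4) := by
  rw [schwarzArea, div_div, mul_assoc 2]
  congr 2
  field_simp

lemma tendsto_schwarzArea_of_tendsto_div_sq {n : ℕ → ℕ} {L : ℝ}
    (h : Tendsto (fun m => (n m : ℝ) / m ^ 2) atTop (𝓝 L)) :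
    Tendsto (fun m => schwarzArea m (n m)) atTop (𝓝 (2 * π * √(1 + π ^ 4 * L ^ 2 / 4))) := by
  have hlim : Tendsto (fun m : ℕ => 2 * (m * sin (π / m)) *
      √(1 + 4 * ((n m : ℝ) / m ^ 2) ^ 2 * (m * sin (π / 2 / m)) ^ 4)) atTop
      (𝓝 (2 * π * √(1 + 4 * L ^ 2 * (π / 2) ^ 4))) :=
    ((tendsto_natCast_mul_sin_div π).const_mul 2).mul
      ((((h.pow 2).const_mul 4).mul ((tendsto_natCast_mul_sin_div (π / 2)).pow 4)).const_add 1).sqrt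
  convert hlim.congr' _ using 4
  · ring
  · filter_upwards [eventually_ne_atTop 0] with m hm
    exact (schwarzArea_eq hm (n m)).symm

lemma tendsto_schwarzArea_atTop_of_tendsto_div_sq {n : ℕ → ℕ}
    (h : Tendsto (fun m => (n m : ℝ) / m ^ 2) atTop atTop) :
    Tendsto (fun m => schwarzArea m (n m)) atTop atTop := by
  have hsqrt : Tendsto (fun m : ℕ =>
      √(1 + 4 * ((n m : ℝ) / m ^ 2) ^ 2 * (m * sin (π / 2 / m)) ^ 4)) atTop atTop := by
    refine tendsto_sqrt_atTop.comp (tendsto_atTop_add_const_left _ 1 ?_)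
    refine (((tendsto_pow_atTop two_ne_zero).comp h).const_mul_atTop four_pos).atTop_mul_pos
      (by positivity) ((tendsto_natCast_mul_sin_div (π / 2)).pow 4)
  refine (((tendsto_natCast_mul_sin_div π).const_mul 2).pos_mul_atTop (by positivity)
    hsqrt).congr' ?_
  filter_upwards [eventually_ne_atTop 0] with m hm
  exact (schwarzArea_eq hm (n m)).symm

/-- The Schwarz–Peano counterexample to Serret's definition of surface area:
as `m → ∞`, `a_{m,m} → 2π`, `a_{m,m²} → 2π√(1 + π⁴/4)` and `a_{m,m³} → +∞`;
hence the areas of the inscribed polyhedral surfaces `𝒮_{m,n}` have no limit as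
`m, n → ∞` jointly. -/
theorem schwarz_peano_counterexample :
    Tendsto (fun m : ℕ => schwarzArea m m) atTop (nhds (2 * π)) ∧
      Tendsto (fun m : ℕ => schwarzArea m (m ^ 2)) atTop
        (nhds (2 * π * Real.sqrt (1 + π ^ 4 / 4))) ∧
      Tendsto (fun m : ℕ => schwarzArea m (m ^ 3)) atTop atTop := by
  refine ⟨?_, ?_, ?_⟩
  · have hdiv : Tendsto (fun m : ℕ => (m : ℝ) / m ^ 2) atTop (𝓝 0) := by
      refine tendsto_one_div_atTop_nhds_zero_nat.congr' ?_
      filter_upwards [eventually_ne_atTop 0] with m hm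
      field_simp
    simpa using tendsto_schwarzArea_of_tendsto_div_sq (n := id) hdiv
  · have hdiv : Tendsto (fun m : ℕ => ((m ^ 2 : ℕ) : ℝ) / m ^ 2) atTop (𝓝 1) := by
      refine tendsto_const_nhds.congr' ?_
      filter_upwards [eventually_ne_atTop 0] with m hm
      push_cast
      field_simp
    simpa using tendsto_schwarzArea_of_tendsto_div_sq hdiv
  · refine tendsto_schwarzArea_atTop_of_tendsto_div_sq (tendsto_natCast_atTop_atTop.congr' ?_)
    filter_upwards [eventually_ne_atTop 0] with m hm
    field_simp
    push_cast
    ring
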